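/- arXiv:1811.04192 — 2 statements merged into one kernel-verified Lean document; each statement's English description precedes it below -/
import Mathlib

section
/- Let V be a vector space over a field F (possibly infinite-dimensional) equipped with a linear automorphism σ such that V is the union (direct limit) of finite-dimensional σ-invariant subspaces. Then dim(V/Im(σ-1)) ≤ dim Ker(σ-1); in particular, every finite-dimensional quotient of V on which σ acts trivially has dimension at most dim Ker(σ-1). -/
open LinearMap Submodule Cardinal Module

section Aux

variable {F V : Type*} [Field F] [AddCommGroup V] [Module F V]

/-- Coercion of powers of a restricted endomorphism. -/
lemma aux_pow_restrict_coe (f : V →ₗ[F] V) (U : Submodule F V)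
    (h : ∀ u ∈ U, f u ∈ U) (k : ℕ) :
    ∀ u : U, (((f.restrict h) ^ k) u : V) = (f ^ k) (u : V) := by
  induction k with
  | zero => intro u; simp
  | succ n ih =>
      intro u
      rw [pow_succ', pow_succ', Module.End.mul_apply, Module.End.mul_apply,
        LinearMap.restrict_coe_apply, ih u]

/-- Any finite set of vectors lies in a common finite-dimensional σ-stable subspace. -/
lemma aux_exists_stable_fd (σ : V ≃ₗ[F] V)
    (hunion : ∀ v : V, ∃ U : Submodule F V, FiniteDimensional F U ∧
      (∀ u ∈ U, σ u ∈ U) ∧ v ∈ U) (s : Finset V) :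
    ∃ U : Submodule F V, FiniteDimensional F U ∧ (∀ u ∈ U, σ u ∈ U) ∧ ∀ v ∈ s, v ∈ U := by
  classical
  induction s using Finset.induction with
  | empty => exact ⟨⊥, inferInstance, by simp, by simp⟩
  | @insert a s ha ih =>
      obtain ⟨U, hUfd, hUstab, hUmem⟩ := ih
      obtain ⟨W, hWfd, hWstab, hWv⟩ := hunion a
      refine ⟨U ⊔ W, inferInstance, ?_, ?_⟩
      · intro u hu
        rw [Submodule.mem_sup] at hu ⊢
        obtain ⟨x, hx, y, hy, rfl⟩ := hu
        exact ⟨σ x, hUstab x hx, σ y, hWstab y hy, by simp⟩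
      · intro v hv
        rcases Finset.mem_insert.mp hv with rfl | hv
        · exact Submodule.mem_sup_right hWv
        · exact Submodule.mem_sup_left (hUmem v hv)

end Aux

/-- Let `V` be an `F`-vector space (possibly infinite-dimensional) with a
linear automorphism `σ`, such that `V` is the union of a family of finite-dimensional
`σ`-invariant subspaces (every vector lies in some finite-dimensional `σ`-stable
submodule).  Then `dim (V / Im (σ - 1)) ≤ dim Ker (σ - 1)` (cardinal-valued dimensions). -/
theorem stmt_2 {F V : Type*} [Field F] [AddCommGroup V] [Module F V]
    (σ : V ≃ₗ[F] V)
    (hunion : ∀ v : V, ∃ U : Submodule F V, FiniteDimensional F U ∧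
      (∀ u ∈ U, σ u ∈ U) ∧ v ∈ U) :
    Module.rank F (V ⧸ LinearMap.range ((σ : V →ₗ[F] V) - 1)) ≤
      Module.rank F (LinearMap.ker ((σ : V →ₗ[F] V) - 1)) := by
  classical
  set f : V →ₗ[F] V := (σ : V →ₗ[F] V) - 1 with hf
  set K : Submodule F V := LinearMap.ker f with hK
  set R : Submodule F V := LinearMap.range f with hR
  -- stability transfers from σ to f
  have hstab : ∀ (U : Submodule F V), (∀ u ∈ U, σ u ∈ U) → ∀ u ∈ U, f u ∈ U := by
    intro U hU u hu
    have : f u = σ u - u := by simp [hf]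
    rw [this]
    exact Submodule.sub_mem U (hU u hu) hu
  by_cases hfin : Module.rank F K < Cardinal.aleph0
  · -- finite-dimensional kernel
    haveI : FiniteDimensional F K := Module.rank_lt_aleph0_iff.mp hfin
    rw [← Module.finrank_eq_rank F K]
    apply _root_.rank_le
    intro s hs
    -- lift the elements of s to V
    have hsurj := Submodule.mkQ_surjective R
    set l : (V ⧸ R) → V := Function.surjInv hsurj with hl
    have hml : ∀ q, R.mkQ (l q) = q := fun q => Function.surjInv_eq hsurj q
    obtain ⟨U, hUfd, hUstab, hUmem⟩ := aux_exists_stable_fd σ hunion (s.image l)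
    have hfU : ∀ u ∈ U, f u ∈ U := hstab U hUstab
    set φ : U →ₗ[F] V ⧸ R := R.mkQ.comp U.subtype with hφ
    haveI : FiniteDimensional F (LinearMap.range φ) := inferInstance
    set g : U →ₗ[F] U := f.restrict hfU with hg
    -- range g ≤ ker φ
    have hrg : LinearMap.range g ≤ LinearMap.ker φ := by
      rintro x ⟨y, rfl⟩
      simp only [LinearMap.mem_ker, hφ, LinearMap.comp_apply, Submodule.subtype_apply]
      rw [LinearMap.restrict_apply]
      exact (Submodule.Quotient.mk_eq_zero R).mpr ⟨(y : V), rfl⟩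
    -- finrank computations inside U
    have e1 : finrank F (LinearMap.range φ) + finrank F (LinearMap.ker φ) = finrank F U :=
      φ.finrank_range_add_finrank_ker
    have e2 : finrank F (LinearMap.range g) + finrank F (LinearMap.ker g) = finrank F U :=
      g.finrank_range_add_finrank_ker
    have e3 : finrank F (LinearMap.range g) ≤ finrank F (LinearMap.ker φ) :=
      Submodule.finrank_mono hrg
    have e4 : finrank F (LinearMap.range φ) ≤ finrank F (LinearMap.ker g) := by omega
    -- ker g embeds into K
    have e5 : finrank F (LinearMap.ker g) ≤ finrank F K := by
      have hmem : ∀ x : LinearMap.ker g, ((x : U) : V) ∈ K := by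
        rintro ⟨x, hx⟩
        rw [LinearMap.mem_ker] at hx ⊢
        have : ((g x : U) : V) = f (x : V) := by rw [hg, LinearMap.restrict_apply]
        rw [← this, hx, Submodule.coe_zero]
      refine LinearMap.finrank_le_finrank_of_injective
        (f := LinearMap.codRestrict K (U.subtype.comp (LinearMap.ker g).subtype)
          (fun x => hmem x)) ?_
      intro x y hxy
      have := congrArg (Subtype.val) hxy
      exact Subtype.ext (Subtype.ext this)
    -- s lies in range φ
    have hsub : (s : Set (V ⧸ R)) ⊆ (LinearMap.range φ : Set (V ⧸ R)) := by
      intro q hq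
      have hlq : l q ∈ U := hUmem (l q) (Finset.mem_image.mpr ⟨q, hq, rfl⟩)
      exact ⟨⟨l q, hlq⟩, by simp [hφ, hml q]⟩
    have hspan : Submodule.span F (s : Set (V ⧸ R)) ≤ LinearMap.range φ :=
      Submodule.span_le.mpr hsub
    calc (s.card : ℕ) = finrank F (Submodule.span F (s : Set (V ⧸ R))) :=
          (finrank_span_finset_eq_card hs).symm
      _ ≤ finrank F (LinearMap.range φ) := Submodule.finrank_mono hspan
      _ ≤ finrank F (LinearMap.ker g) := e4
      _ ≤ finrank F K := e5
  · -- infinite-dimensional kernel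
    push_neg at hfin
    set κ := Module.rank F K with hκ
    -- rank of iterated kernels
    have hker : ∀ n : ℕ, Module.rank F (LinearMap.ker (f ^ n)) ≤ κ := by
      intro n
      induction n with
      | zero =>
          rw [pow_zero, Module.End.one_eq_id, LinearMap.ker_id, rank_bot]
          exact zero_le
      | succ n ih =>
          have hmap : ∀ x ∈ LinearMap.ker (f ^ (n + 1)), f x ∈ LinearMap.ker (f ^ n) := by
            intro x hx
            rw [LinearMap.mem_ker] at hx ⊢
            rw [← Module.End.mul_apply, ← pow_succ]
            exact hx
          set g := f.restrict hmap with hgdef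
          have e1 : Module.rank F (LinearMap.range g) + Module.rank F (LinearMap.ker g)
              = Module.rank F (LinearMap.ker (f ^ (n + 1))) := g.rank_range_add_rank_ker
          have e2 : Module.rank F (LinearMap.range g) ≤ κ :=
            le_trans (Submodule.rank_le _) ih
          have e3 : Module.rank F (LinearMap.ker g) ≤ κ := by
            have hmem : ∀ x : LinearMap.ker g, (((x : _) : V)) ∈ K := by
              rintro ⟨x, hx⟩
              rw [LinearMap.mem_ker] at hx ⊢
              have : ((g x : _) : V) = f (x : V) := by rw [hgdef, LinearMap.restrict_apply]
              rw [← this, hx, Submodule.coe_zero]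
            refine LinearMap.rank_le_of_injective
              (LinearMap.codRestrict K
                ((LinearMap.ker (f ^ (n+1))).subtype.comp (LinearMap.ker g).subtype)
                (fun x => hmem x)) ?_
            intro x y hxy
            have := congrArg Subtype.val hxy
            exact Subtype.ext (Subtype.ext this)
          calc Module.rank F (LinearMap.ker (f ^ (n + 1)))
              = Module.rank F (LinearMap.range g) + Module.rank F (LinearMap.ker g) := e1.symm
            _ ≤ κ + κ := add_le_add e2 e3
            _ = κ := Cardinal.add_eq_self hfin
    -- the locally nilpotent part V₁
    set V₁ : Submodule F V := ⨆ n : ℕ, LinearMap.ker (f ^ n) with hV₁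
    have hrankV₁ : Module.rank F V₁ ≤ κ := by
      set T : ℕ → Set V := fun n =>
        ⇑((LinearMap.ker (f ^ n)).subtype) '' (Set.range (Basis.ofVectorSpace F (LinearMap.ker (f ^ n)))) with hT
      have hTspan : ∀ n, Submodule.span F (T n) = LinearMap.ker (f ^ n) := by
        intro n
        rw [hT]
        simp only
        rw [← Submodule.map_span, Basis.span_eq, Submodule.map_subtype_top]
      have hTcard : ∀ n, #(T n) ≤ κ := by
        intro n
        refine le_trans Cardinal.mk_image_le ?_
        refine le_trans Cardinal.mk_range_le ?_
        rw [(Basis.ofVectorSpace F (LinearMap.ker (f ^ n))).mk_eq_rank'']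
        exact hker n
      have hspanU : Submodule.span F (⋃ n, T n) = V₁ := by
        rw [Submodule.span_iUnion, hV₁]
        exact iSup_congr hTspan
      rw [← hspanU]
      refine le_trans (rank_span_le _) ?_
      have h := Cardinal.mk_iUnion_le_lift (f := T)
      simp only [Cardinal.lift_uzero, Cardinal.mk_nat, Cardinal.lift_aleph0] at h
      refine le_trans h ?_
      have : Cardinal.aleph0 * ⨆ n, #(T n) ≤ Cardinal.aleph0 * κ :=
        mul_le_mul' le_rfl (ciSup_le' hTcard)
      refine le_trans this ?_
      rw [Cardinal.mul_eq_max le_rfl hfin]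
      exact max_le hfin le_rfl
    -- V = V₁ + range f  (Fitting decomposition on finite-dimensional stable subspaces)
    have hcod : ∀ v : V, ∃ a ∈ V₁, ∃ b ∈ R, v = a + b := by
      intro v
      obtain ⟨U, hUfd, hUstab, hUv⟩ := hunion v
      have hfU : ∀ u ∈ U, f u ∈ U := hstab U hUstab
      set g : U →ₗ[F] U := f.restrict hfU with hg
      obtain ⟨n₀, hn₀⟩ := Filter.eventually_atTop.mp
        (LinearMap.eventually_isCompl_ker_pow_range_pow g)
      set m := n₀ + 1 with hm
      have hcompl : IsCompl (LinearMap.ker (g ^ m)) (LinearMap.range (g ^ m)) :=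
        hn₀ m (Nat.le_succ n₀)
      have htop : LinearMap.ker (g ^ m) ⊔ LinearMap.range (g ^ m) = ⊤ :=
        codisjoint_iff.mp hcompl.codisjoint
      have hv' : (⟨v, hUv⟩ : U) ∈ LinearMap.ker (g ^ m) ⊔ LinearMap.range (g ^ m) := by
        rw [htop]; trivial
      obtain ⟨a, ha, b, hb, hab⟩ := Submodule.mem_sup.mp hv'
      refine ⟨(a : V), ?_, (b : V), ?_, ?_⟩
      · -- a lies in ker (f ^ m) ≤ V₁
        have : (a : V) ∈ LinearMap.ker (f ^ m) := by
          rw [LinearMap.mem_ker]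
          have := aux_pow_restrict_coe f U hfU m a
          rw [← this]
          rw [LinearMap.mem_ker] at ha
          rw [ha, Submodule.coe_zero]
        exact (le_iSup (fun n : ℕ => LinearMap.ker (f ^ n)) m) this
      · -- b lies in range f
        obtain ⟨w, rfl⟩ := hb
        have hbw : (((g ^ m) w : U) : V) = (f ^ m) (w : V) := aux_pow_restrict_coe f U hfU m w
        rw [hbw, hm, pow_succ']
        exact ⟨(f ^ n₀) (w : V), rfl⟩
      · have := congrArg (Subtype.val : U → V) hab
        simpa using this.symm
    -- conclude via a surjection V₁ → V ⧸ R
    set φ : V₁ →ₗ[F] V ⧸ R := R.mkQ.comp V₁.subtype with hφ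
    have hφsurj : Function.Surjective φ := by
      intro q
      obtain ⟨v, rfl⟩ := Submodule.mkQ_surjective R q
      obtain ⟨a, ha, b, hb, rfl⟩ := hcod v
      refine ⟨⟨a, ha⟩, ?_⟩
      simp only [hφ, LinearMap.comp_apply, Submodule.subtype_apply, Submodule.mkQ_apply]
      rw [Submodule.Quotient.mk_add]
      rw [(Submodule.Quotient.mk_eq_zero R).mpr hb, add_zero]
    exact le_trans (φ.rank_le_of_surjective hφsurj) hrankV₁
end

section
/- Let V be a vector space over a field F with a linear automorphism σ, W a finite-dimensional quotient of V on which σ acts trivially (i.e., the quotient map π : V → W satisfies π∘σ = π), and suppose U ⊆ V is a finite-dimensional σ-stable subspace with π(U) = W. Then dim W ≤ dim Ker(σ - 1 : V → V). -/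
/-- Let `V` be an `F`-vector space with a linear automorphism `σ`,
`π : V → W` a surjective linear map onto a finite-dimensional space on which `σ` acts
trivially (`π (σ v) = π v` for all `v`), and `U ⊆ V` a finite-dimensional `σ`-stable
subspace with `π(U) = W`.  Then `dim W ≤ dim Ker (σ - 1 : V → V)`. -/
theorem stmt_3 {F V W : Type*} [Field F] [AddCommGroup V] [Module F V]
    [AddCommGroup W] [Module F W] [FiniteDimensional F W]
    (σ : V ≃ₗ[F] V) (π : V →ₗ[F] W) (hπ : Function.Surjective π)
    (htriv : ∀ v : V, π (σ v) = π v)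
    (U : Submodule F V) (hU : FiniteDimensional F U)
    (hstab : ∀ u ∈ U, σ u ∈ U) (hsurj : U.map π = ⊤) :
    (Module.finrank F W : Cardinal) ≤
      Module.rank F (LinearMap.ker ((σ : V →ₗ[F] V) - 1)) := by
  classical
  -- τ : restriction of σ to U
  set τ : U →ₗ[F] U := (σ : V →ₗ[F] V).restrict hstab with hτ
  -- π restricted to U
  set π' : U →ₗ[F] W := π.comp U.subtype with hπ'
  have hπ'surj : LinearMap.range π' = ⊤ := by
    rw [hπ', LinearMap.range_comp, Submodule.range_subtype, hsurj]
  -- (τ - 1) lands in ker π'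
  have hrange : LinearMap.range (τ - 1) ≤ LinearMap.ker π' := by
    rintro x ⟨u, rfl⟩
    simp only [LinearMap.mem_ker, LinearMap.sub_apply, Module.End.one_apply, map_sub,
      hπ', LinearMap.comp_apply, Submodule.coe_subtype]
    have : ((τ u : U) : V) = σ (u : V) := rfl
    rw [this, htriv, sub_self]
  -- rank-nullity facts
  have h1 : Module.finrank F (LinearMap.range (τ - 1)) +
      Module.finrank F (LinearMap.ker (τ - 1)) = Module.finrank F U :=
    LinearMap.finrank_range_add_finrank_ker (τ - 1)
  have h2 : Module.finrank F (LinearMap.range π') +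
      Module.finrank F (LinearMap.ker π') = Module.finrank F U :=
    LinearMap.finrank_range_add_finrank_ker π'
  have h3 : Module.finrank F (LinearMap.range π') = Module.finrank F W := by
    rw [hπ'surj]; exact finrank_top F W
  have h4 : Module.finrank F (LinearMap.range (τ - 1)) ≤
      Module.finrank F (LinearMap.ker π') :=
    Submodule.finrank_mono hrange
  have hkey : Module.finrank F W ≤ Module.finrank F (LinearMap.ker (τ - 1)) := by
    omega
  -- embed ker (τ - 1) into ker (σ - 1)
  let f : LinearMap.ker (τ - 1) →ₗ[F] LinearMap.ker ((σ : V →ₗ[F] V) - 1) :=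
    { toFun := fun x => ⟨((x : U) : V), by
        have hx : τ (x : U) - (x : U) = 0 := x.2
        have hx' : τ (x : U) = (x : U) := by
          rwa [sub_eq_zero] at hx
        have : σ ((x : U) : V) = ((x : U) : V) := by
          have := congrArg (Subtype.val) hx'
          exact this
        simp [LinearMap.mem_ker, LinearMap.sub_apply, this]⟩
      map_add' := fun x y => by ext; simp
      map_smul' := fun c x => by ext; simp }
  have hfinj : Function.Injective f := by
    intro x y hxy
    have h0 : ((f x : LinearMap.ker ((σ : V →ₗ[F] V) - 1)) : V) = ((f y : LinearMap.ker ((σ : V →ₗ[F] V) - 1)) : V) :=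
      congrArg Subtype.val hxy
    ext
    exact h0
  calc (Module.finrank F W : Cardinal)
      ≤ (Module.finrank F (LinearMap.ker (τ - 1)) : Cardinal) := by exact_mod_cast hkey
    _ = Module.rank F (LinearMap.ker (τ - 1)) := Module.finrank_eq_rank F _
    _ ≤ Module.rank F (LinearMap.ker ((σ : V →ₗ[F] V) - 1)) :=
        LinearMap.rank_le_of_injective f hfinj
end
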